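/- Let 0 → I → M → F → 0 be a short exact sequence of G-lattices where I is invertible and F is flasque. Then the sequence splits. -/

import Mathlib

/-- The multiplicative group structure on `AddAut M` (multiplication is composition) that
Mathlib provided when this statement was written; Mathlib now makes `AddAut M` an additive group. -/
instance AddAut.groupByComposition {M : Type*} [Add M] : Group (AddAut M) where
  mul g h := AddEquiv.trans h g
  one := AddEquiv.refl _
  inv := AddEquiv.symm
  mul_assoc _ _ _ := rfl
  one_mul _ := rfl
  mul_one _ := rfl
  inv_mul_cancel := AddEquiv.self_trans_symm

@[simp]
theorem AddAut.one_apply_comp {M : Type*} [Add M] (m : M) : (1 : AddAut M) m = m := rfl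

@[simp]
theorem AddAut.mul_apply_comp {M : Type*} [Add M] (e₁ e₂ : AddAut M) (m : M) :
    (e₁ * e₂) m = e₁ (e₂ m) := rfl

/-- A 1-cohomology-vanishing ("coflasque") condition for an action `ρ` of `G` on `M`:
every 1-cocycle of every subgroup is a coboundary. -/
def IsCoflasque {G M : Type*} [Group G] [AddCommGroup M] (ρ : G →* AddAut M) : Prop :=
  ∀ (H : Subgroup G) (c : ↥H → M),
    (∀ g h : ↥H, c (g * h) = c g + ρ ↑g (c h)) → ∃ m : M, ∀ g : ↥H, c g = ρ ↑g m - m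

/-- "Flasque" condition (vanishing of `Ĥ⁻¹` for all subgroups): every element killed by
the norm of a subgroup lies in the augmentation submodule. -/
def IsFlasque {G M : Type*} [Group G] [Finite G] [AddCommGroup M] (ρ : G →* AddAut M) : Prop :=
  ∀ (H : Subgroup G) (x : M), (∑ᶠ h : ↥H, ρ ↑h x = 0) →
    x ∈ AddSubgroup.closure {y | ∃ (h : ↥H) (m : M), y = ρ ↑h m - m}

/-- The permutation action of `G` on `ι → ℤ` induced by an action on `ι`. -/
def permAut {G ι : Type*} [Group G] (act : G →* Equiv.Perm ι) : G →* AddAut (ι → ℤ) where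
  toFun g :=
    { toEquiv := Equiv.arrowCongr (act g) (Equiv.refl ℤ)
      map_add' := fun _ _ => rfl }
  map_one' := by ext f i; simp; rfl
  map_mul' := by
    intro g h; ext f i
    simp [← Equiv.Perm.inv_def, mul_inv_rev, Equiv.Perm.mul_apply]
    rfl

/-- `ρ` is a permutation representation: `M` is equivariantly isomorphic to a
finitely generated permutation `G`-lattice. -/
def IsPermutationRep {G M : Type*} [Group G] [AddCommGroup M] (ρ : G →* AddAut M) : Prop :=
  ∃ (ι : Type) (_ : Fintype ι) (act : G →* Equiv.Perm ι) (e : M ≃+ (ι → ℤ)),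
    ∀ (g : G) (m : M), e (ρ g m) = permAut act g (e m)

/-- `ρ` is invertible (permutation projective): `M` is an equivariant direct summand of a
finitely generated permutation `G`-lattice. -/
def IsInvertibleRep {G M : Type*} [Group G] [AddCommGroup M] (ρ : G →* AddAut M) : Prop :=
  ∃ (ι : Type) (_ : Fintype ι) (act : G →* Equiv.Perm ι)
    (f : M →+ (ι → ℤ)) (g : (ι → ℤ) →+ M),
      (∀ (γ : G) (m : M), f (ρ γ m) = permAut act γ (f m)) ∧
      (∀ (γ : G) (x : ι → ℤ), g (permAut act γ x) = ρ γ (g x)) ∧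
      (∀ m : M, g (f m) = m)

/-- The diagonal action on a product. -/
def prodAut {G M N : Type*} [Group G] [AddCommGroup M] [AddCommGroup N]
    (ρ : G →* AddAut M) (σ : G →* AddAut N) : G →* AddAut (M × N) where
  toFun g := AddEquiv.prodCongr (ρ g) (σ g)
  map_one' := by
    ext x <;> simp [AddEquiv.prodCongr, AddAut.one_apply_comp]
  map_mul' := by
    intro g h
    ext x <;> simp [AddEquiv.prodCongr, AddAut.mul_apply_comp]

/-! Since `I` is a direct summand of a permutation lattice `ℤ^ι`, it suffices to extend the
embedding `I → ℤ^ι` equivariantly to `M`. On each orbit of `ι` an equivariant map to `ℤ^ι` is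
the same as a functional on `M` invariant under the stabilizer `H` of a representative, so one
has to extend `H`-invariant functionals from `I` to `M`. A `ℤ`-linear extension exists because
`F` is free, and its failure to be invariant is a 1-cocycle of `H` with values in
`F* = Hom(F, ℤ)`. That cocycle is a coboundary: if `S` is its sum over `H`, then `|H| • c = δS`;
`S` is divisible by `|H|` on the augmentation subgroup `I_H F`, and flasqueness makes
`F / I_H F` torsion-free, so `I_H F` is a direct summand of `F` and `S / |H|` extends to `F`. -/

section

variable {G : Type*} [Group G]

section Actions

variable {X : Type*} [AddCommGroup X] (ρ : G →* AddAut X)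

theorem aut_mul_apply (a b : G) (x : X) : ρ (a * b) x = ρ a (ρ b x) := by
  rw [map_mul]; rfl

@[simp]
theorem AddAut.apply_inv_apply_comp (e : AddAut X) (x : X) : e (e⁻¹ x) = x :=
  e.apply_symm_apply x

@[simp]
theorem AddAut.inv_apply_apply_comp (e : AddAut X) (x : X) : e⁻¹ (e x) = x :=
  e.symm_apply_apply x

def dualAut : G →* AddAut (X →+ ℤ) where
  toFun g :=
    { toFun := fun φ => φ.comp (ρ g⁻¹).toAddMonoidHom
      invFun := fun φ => φ.comp (ρ g).toAddMonoidHom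
      left_inv := fun φ => by ext; simp
      right_inv := fun φ => by ext; simp
      map_add' := fun _ _ => rfl }
  map_one' := by ext; simp
  map_mul' g h := by ext; simp

@[simp]
theorem dualAut_apply (g : G) (φ : X →+ ℤ) (x : X) : dualAut ρ g φ x = φ (ρ g⁻¹ x) := rfl

theorem dualAut_eq_self_iff {φ : X →+ ℤ} {g : G} :
    dualAut ρ g φ = φ ↔ ∀ x, φ (ρ g x) = φ x :=
  ⟨fun h x => by simpa using (DFunLike.congr_fun h (ρ g x)).symm,
    fun h => AddMonoidHom.ext fun x => by simpa using (h (ρ g⁻¹ x)).symm⟩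

end Actions

theorem IsCoflasque.exists_invariant_sub_of_coboundary_mem_range {A B : Type*}
    [AddCommGroup A] [AddCommGroup B] {ρA : G →* AddAut A} {ρB : G →* AddAut B}
    (hA : IsCoflasque ρA) (q : A →+ B) (hq : Function.Injective q)
    (hqρ : ∀ (g : G) (a : A), q (ρA g a) = ρB g (q a)) (H : Subgroup G) (b : B)
    (hb : ∀ h ∈ H, ρB h b - b ∈ Set.range q) :
    ∃ a : A, ∀ h ∈ H, ρB h (b - q a) = b - q a := by
  choose c hc using fun h : H => hb h h.2
  have hcocycle : ∀ g h : H, c (g * h) = c g + ρA g (c h) := by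
    intro g h
    apply hq
    rw [map_add, hqρ, hc, hc, hc, Subgroup.coe_mul, aut_mul_apply, map_sub]
    abel
  obtain ⟨a, ha⟩ := hA H c hcocycle
  refine ⟨a, fun h hh => ?_⟩
  have hqa := congrArg q (ha ⟨h, hh⟩)
  rw [hc, map_sub, hqρ] at hqa
  rw [map_sub, sub_eq_sub_iff_sub_eq_sub]
  exact hqa

theorem Function.Exact.exists_comp_eq_of_comp_eq_zero {I M F N : Type*} [AddCommGroup I]
    [AddCommGroup M] [AddCommGroup F] [AddCommGroup N] {j : I →+ M} {p : M →+ F}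
    (hexact : Function.Exact j p) (hsurj : Function.Surjective p) (φ : M →+ N) (hφ : φ.comp j = 0) :
    ∃ ψ : F →+ N, ψ.comp p = φ := by
  refine ⟨p.liftOfSurjective hsurj ⟨φ, fun m hm => ?_⟩, by simp⟩
  obtain ⟨x, rfl⟩ := (hexact m).mp hm
  exact DFunLike.congr_fun hφ x

theorem exists_invariant_extension_of_isCoflasque_dual {I M F : Type*}
    [AddCommGroup I] [AddCommGroup M] [AddCommGroup F]
    {ρI : G →* AddAut I} {ρM : G →* AddAut M} {ρF : G →* AddAut F}
    (hF : IsCoflasque (dualAut ρF)) {j : I →+ M} {p : M →+ F}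
    (hj : ∀ (g : G) (x : I), j (ρI g x) = ρM g (j x))
    (hp : ∀ (g : G) (x : M), p (ρM g x) = ρF g (p x))
    (hexact : Function.Exact j p) (hsurj : Function.Surjective p)
    (H : Subgroup G) (φ₀ : M →+ ℤ) (hφ₀ : ∀ h ∈ H, dualAut ρI h (φ₀.comp j) = φ₀.comp j) :
    ∃ φ : M →+ ℤ, (∀ h ∈ H, dualAut ρM h φ = φ) ∧ φ.comp j = φ₀.comp j := by
  have hpj : p.comp j = 0 := AddMonoidHom.ext hexact.apply_apply_eq_zero
  obtain ⟨ψ, hψ⟩ := hF.exists_invariant_sub_of_coboundary_mem_range (ρB := dualAut ρM)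
    (AddMonoidHom.compHom' p) (fun ψ₁ ψ₂ h => (AddMonoidHom.cancel_right hsurj).mp h)
    (fun g ψ => by ext m; exact congrArg ψ (hp g⁻¹ m).symm) H φ₀ (fun h hh => by
      refine hexact.exists_comp_eq_of_comp_eq_zero hsurj _ ?_
      ext x
      simp only [AddMonoidHom.comp_apply, AddMonoidHom.sub_apply, dualAut_apply, ← hj,
        AddMonoidHom.zero_apply, sub_eq_zero]
      exact DFunLike.congr_fun (hφ₀ h hh) x)
  refine ⟨φ₀ - ψ.comp p, hψ, ?_⟩
  rw [AddMonoidHom.sub_comp, AddMonoidHom.comp_assoc, hpj, AddMonoidHom.comp_zero, sub_zero]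

section Flasque

variable {X : Type*} [AddCommGroup X] (ρ : G →* AddAut X)

theorem card_nsmul_cocycle_eq {H : Subgroup G} [Fintype H] {c : H → X}
    (hc : ∀ g h : H, c (g * h) = c g + ρ g (c h)) (g : H) :
    Fintype.card H • c g = ∑ h, c h - ρ g (∑ h, c h) := by
  have hshift : ∑ h, c (g * h) = ∑ h, c h :=
    Fintype.sum_equiv (Equiv.mulLeft g) _ _ fun _ => rfl
  simp only [hc, Finset.sum_add_distrib, Finset.sum_const, Finset.card_univ, ← map_sum]
    at hshift
  exact eq_sub_of_add_eq hshift

def augmentation (H : Subgroup G) : AddSubgroup X :=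
  AddSubgroup.closure {y | ∃ (h : ↥H) (m : X), y = ρ ↑h m - m}

theorem sum_apply_eq_zero_of_mem_augmentation {H : Subgroup G} [Fintype H] {y : X}
    (hy : y ∈ augmentation ρ H) : ∑ h : H, ρ h y = 0 := by
  let N : X →+ X := ∑ h : H, (ρ h).toAddMonoidHom
  suffices augmentation ρ H ≤ N.ker by simpa [N] using this hy
  refine (AddSubgroup.closure_le _).mpr ?_
  rintro _ ⟨g, m, rfl⟩
  have hshift : ∑ h : H, ρ h (ρ g m) = ∑ h : H, ρ h m :=
    Fintype.sum_equiv (Equiv.mulRight g) _ _ fun h => (aut_mul_apply ρ h g m).symm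
  simp [N, hshift]

variable {ρ}

theorem IsFlasque.isTorsionFree_quotient [Finite G] [Module.IsTorsionFree ℤ X]
    (hF : IsFlasque ρ) (H : Subgroup G) :
    Module.IsTorsionFree ℤ (X ⧸ (augmentation ρ H).toIntSubmodule) := by
  have : Fintype H := .ofFinite H
  refine .of_smul_eq_zero fun k q hkq => ?_
  obtain ⟨x, rfl⟩ := Submodule.Quotient.mk_surjective _ q
  rw [← Submodule.Quotient.mk_smul, Submodule.Quotient.mk_eq_zero] at hkq
  have hnorm := sum_apply_eq_zero_of_mem_augmentation ρ hkq
  simp only [map_zsmul, ← Finset.smul_sum] at hnorm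
  refine (smul_eq_zero.mp hnorm).imp id fun hx =>
    (Submodule.Quotient.mk_eq_zero _).mpr (hF H x ?_)
  rwa [finsum_eq_sum_of_fintype]

end Flasque

theorem Function.Exact.exists_retraction_of_projective {R M N P : Type*} [Ring R]
    [AddCommGroup M] [AddCommGroup N] [AddCommGroup P] [Module R M] [Module R N] [Module R P]
    [Module.Projective R P] {f : M →ₗ[R] N} {g : N →ₗ[R] P} (h : Function.Exact f g)
    (hf : Function.Injective f) (hg : Function.Surjective g) :
    ∃ l : N →ₗ[R] M, l ∘ₗ f = LinearMap.id :=
  ((h.split_tfae hf hg).out 0 1).mp (Module.projective_lifting_property g LinearMap.id hg)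

theorem AddMonoidHom.exists_mul_eq_of_forall_dvd {X : Type*} [AddCommGroup X] (f : X →+ ℤ)
    (n : ℤ) (hdvd : ∀ x, n ∣ f x) : ∃ ψ : X →+ ℤ, ∀ x, n * ψ x = f x :=
  ⟨AddMonoidHom.mk' (fun x => f x / n) fun a b => by
      rw [map_add, Int.add_ediv_of_dvd_right (hdvd b)],
    fun x => Int.mul_ediv_cancel' (hdvd x)⟩

theorem IsFlasque.isCoflasque_dual {X : Type*} [AddCommGroup X] [Module.Finite ℤ X]
    [Module.IsTorsionFree ℤ X] [Finite G] {ρ : G →* AddAut X} (hF : IsFlasque ρ) :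
    IsCoflasque (dualAut ρ) := by
  intro H c hc
  have : Fintype H := .ofFinite H
  set n : ℤ := (Fintype.card H : ℤ) with hn
  set S : X →+ ℤ := ∑ h, c h
  have hcard : ∀ (g : H) (x : X), n * c g x = S x - S (ρ g⁻¹ x) := fun g x => by
    simpa [S] using DFunLike.congr_fun (card_nsmul_cocycle_eq (dualAut ρ) hc g) x
  let A := (augmentation ρ H).toIntSubmodule
  have hSA : ∀ y ∈ A, n ∣ S y := by
    suffices augmentation ρ H ≤ (AddSubgroup.zmultiples n).comap S from
      fun y hy => Int.mem_zmultiples_iff.mp (this hy)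
    refine (AddSubgroup.closure_le _).mpr ?_
    rintro _ ⟨h, m, rfl⟩
    have hm := hcard h⁻¹ m
    rw [Subgroup.coe_inv, inv_inv] at hm
    exact Int.mem_zmultiples_iff.mpr ⟨-c h⁻¹ m, by simp only [map_sub]; linarith⟩
  have := hF.isTorsionFree_quotient H
  obtain ⟨π, hπ⟩ := (LinearMap.exact_subtype_mkQ A).exists_retraction_of_projective
    A.injective_subtype A.mkQ_surjective
  have hπA : ∀ y ∈ A, (π y : X) = y := fun y hy =>
    congrArg Subtype.val (LinearMap.congr_fun hπ ⟨y, hy⟩)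
  obtain ⟨ψ, hψ⟩ := (-(S.comp (A.subtype ∘ₗ π).toAddMonoidHom)).exists_mul_eq_of_forall_dvd n
    fun x => (hSA _ (π x).2).neg_right
  refine ⟨ψ, fun g => AddMonoidHom.ext fun x => ?_⟩
  have hy : ρ g⁻¹ x - x ∈ A := AddSubgroup.subset_closure ⟨g⁻¹, x, rfl⟩
  have hψy : n * ψ (ρ g⁻¹ x - x) = -S (ρ g⁻¹ x - x) := by
    rw [hψ, AddMonoidHom.neg_apply, AddMonoidHom.comp_apply, LinearMap.toAddMonoidHom_coe,
      LinearMap.comp_apply, Submodule.subtype_apply, hπA _ hy]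
  rw [map_sub, map_sub] at hψy
  have hn0 : n ≠ 0 := by simp [hn]
  apply mul_left_cancel₀ hn0
  simp only [AddMonoidHom.sub_apply, dualAut_apply]
  linarith [hcard g x]

section Permutation

variable {ι : Type*} (act : G →* Equiv.Perm ι)

@[simp]
theorem permAut_apply (g : G) (v : ι → ℤ) (i : ι) : permAut act g v i = v ((act g)⁻¹ i) := rfl

def stabilizerOf (i : ι) : Subgroup G := (MulAction.stabilizer (Equiv.Perm ι) i).comap act

@[simp]
theorem mem_stabilizerOf {i : ι} {g : G} : g ∈ stabilizerOf act i ↔ act g i = i := Iff.rfl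

theorem exists_orbit_representatives :
    ∃ (rep : ι → ι) (σ : ι → G), (∀ g i, rep (act g i) = rep i) ∧ ∀ i, act (σ i) (rep i) = i := by
  let _ := MulAction.compHom ι act
  let rep i := (Quotient.mk (MulAction.orbitRel G ι) i).out
  have hrep : ∀ i, ∃ σ : G, act σ (rep i) = i := fun i => by
    obtain ⟨g, hg⟩ := Quotient.mk_out (s := MulAction.orbitRel G ι) i
    refine ⟨g⁻¹, ?_⟩
    rw [show rep i = act g i from hg.symm, map_inv]
    simp
  choose σ hσ using hrep
  exact ⟨rep, σ, fun g i => congrArg Quotient.out (Quotient.sound ⟨g, rfl⟩), hσ⟩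

theorem exists_equivariant_extension_to_permAut {I M : Type*} [AddCommGroup I] [AddCommGroup M]
    {ρI : G →* AddAut I} {ρM : G →* AddAut M} {j : I →+ M}
    (hj : ∀ (g : G) (x : I), j (ρI g x) = ρM g (j x)) (χ : I →+ (ι → ℤ))
    (hχ : ∀ (g : G) (x : I), χ (ρI g x) = permAut act g (χ x))
    (hext : ∀ i, ∃ φ : M →+ ℤ,
      (∀ g ∈ stabilizerOf act i, dualAut ρM g φ = φ) ∧ ∀ x, φ (j x) = χ x i) :
    ∃ Φ : M →+ (ι → ℤ), (∀ (g : G) (m : M), Φ (ρM g m) = permAut act g (Φ m)) ∧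
      ∀ x, Φ (j x) = χ x := by
  choose φ hφ hφj using hext
  obtain ⟨rep, σ, hrep, hσ⟩ := exists_orbit_representatives act
  let Φ : M →+ (ι → ℤ) :=
    AddMonoidHom.pi fun i => (φ (rep i)).comp (ρM (σ i)⁻¹).toAddMonoidHom
  refine ⟨Φ, fun g m => funext fun i => ?_, fun x => funext fun i => ?_⟩
  · set k := (act g)⁻¹ i
    have hk : rep k = rep i := by rw [← hrep g k]; simp [k]
    have hstab : (σ i)⁻¹ * g * σ k ∈ stabilizerOf act (rep i) := by
      rw [mem_stabilizerOf, map_mul, map_mul, Equiv.Perm.mul_apply, Equiv.Perm.mul_apply, ← hk,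
        hσ k, hk, map_inv, Equiv.Perm.inv_eq_iff_eq, hσ]
      simp [k]
    have hmove : ρM (σ i)⁻¹ (ρM g m) = ρM ((σ i)⁻¹ * g * σ k) (ρM (σ k)⁻¹ m) := by
      rw [← aut_mul_apply, ← aut_mul_apply]; group
    change φ (rep i) (ρM (σ i)⁻¹ (ρM g m)) = φ (rep k) (ρM (σ k)⁻¹ m)
    rw [hmove, (dualAut_eq_self_iff ρM).mp (hφ _ _ hstab), hk]
  · change φ (rep i) (ρM (σ i)⁻¹ (j x)) = χ x i
    rw [← hj, hφj, hχ, permAut_apply, map_inv, inv_inv, hσ]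

end Permutation

theorem dualAut_eval_comp_eq_self {ι I : Type*} [AddCommGroup I] {act : G →* Equiv.Perm ι}
    {ρI : G →* AddAut I} {χ : I →+ (ι → ℤ)}
    (hχ : ∀ (g : G) (x : I), χ (ρI g x) = permAut act g (χ x)) {i : ι} {g : G}
    (hg : g ∈ stabilizerOf act i) :
    dualAut ρI g ((Pi.evalAddMonoidHom (fun _ => ℤ) i).comp χ) =
      (Pi.evalAddMonoidHom (fun _ => ℤ) i).comp χ := by
  refine (dualAut_eq_self_iff ρI).mpr fun x => ?_
  rw [mem_stabilizerOf] at hg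
  simp [hχ, Equiv.Perm.inv_eq_iff_eq.mpr hg.symm]

end

theorem invertible_flasque_splits_general {G I M F : Type*} [Group G] [Fintype G]
    [AddCommGroup I] [AddCommGroup M] [AddCommGroup F]
    [Module.Free ℤ F] [Module.Finite ℤ F]
    (ρI : G →* AddAut I) (ρM : G →* AddAut M) (ρF : G →* AddAut F)
    (j : I →+ M) (p : M →+ F)
    (hj : ∀ (g : G) (x : I), j (ρI g x) = ρM g (j x))
    (hp : ∀ (g : G) (x : M), p (ρM g x) = ρF g (p x))
    (hinj : Function.Injective j) (hsurj : Function.Surjective p)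
    (hexact : ∀ m : M, p m = 0 ↔ m ∈ Set.range j)
    (hI : IsInvertibleRep ρI) (hF : IsFlasque ρF) :
    ∃ r : M →+ I, (∀ (g : G) (x : M), r (ρM g x) = ρI g (r x)) ∧ ∀ x : I, r (j x) = x := by
  obtain ⟨ι, _, act, f, g, hf, hg, hgf⟩ := hI
  have hexact : Function.Exact j p := hexact
  obtain ⟨r₀, hr₀⟩ := Function.Exact.exists_retraction_of_projective
    (f := j.toIntLinearMap) (g := p.toIntLinearMap) hexact hinj hsurj
  have hr₀j : r₀.toAddMonoidHom.comp j = AddMonoidHom.id I :=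
    AddMonoidHom.ext (LinearMap.congr_fun hr₀)
  have hcoord (i : ι) : ∃ φ : M →+ ℤ,
      (∀ γ ∈ stabilizerOf act i, dualAut ρM γ φ = φ) ∧ ∀ x, φ (j x) = f x i := by
    let χ := (Pi.evalAddMonoidHom (fun _ => ℤ) i).comp f
    obtain ⟨φ, hφ, hφj⟩ := exists_invariant_extension_of_isCoflasque_dual
      hF.isCoflasque_dual hj hp hexact hsurj (stabilizerOf act i) (χ.comp r₀.toAddMonoidHom)
      fun γ hγ => by
        rw [AddMonoidHom.comp_assoc, hr₀j, AddMonoidHom.comp_id]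
        exact dualAut_eval_comp_eq_self hf hγ
    refine ⟨φ, hφ, fun x => ?_⟩
    rw [← AddMonoidHom.comp_apply, hφj, AddMonoidHom.comp_assoc, hr₀j, AddMonoidHom.comp_id]
    rfl
  obtain ⟨Φ, hΦ, hΦj⟩ := exists_equivariant_extension_to_permAut act hj f hf hcoord
  exact ⟨g.comp Φ, fun γ m => by simp [hΦ, hg], fun x => by simp [hΦj, hgf]⟩

/-- A short exact sequence of `G`-lattices `0 → I → M → F → 0` with `I` invertible and
`F` flasque splits. -/
theorem invertible_flasque_splits {G I M F : Type*} [Group G] [Fintype G]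
    [AddCommGroup I] [AddCommGroup M] [AddCommGroup F]
    [Module.Free ℤ I] [Module.Finite ℤ I]
    [Module.Free ℤ M] [Module.Finite ℤ M]
    [Module.Free ℤ F] [Module.Finite ℤ F]
    (ρI : G →* AddAut I) (ρM : G →* AddAut M) (ρF : G →* AddAut F)
    (j : I →+ M) (p : M →+ F)
    (hj : ∀ (g : G) (x : I), j (ρI g x) = ρM g (j x))
    (hp : ∀ (g : G) (x : M), p (ρM g x) = ρF g (p x))
    (hinj : Function.Injective j) (hsurj : Function.Surjective p)
    (hexact : ∀ m : M, p m = 0 ↔ m ∈ Set.range j)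
    (hI : IsInvertibleRep ρI) (hF : IsFlasque ρF) :
    ∃ r : M →+ I, (∀ (g : G) (x : M), r (ρM g x) = ρI g (r x)) ∧ ∀ x : I, r (j x) = x :=
  invertible_flasque_splits_general ρI ρM ρF j p hj hp hinj hsurj hexact hI hF
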